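/- For the single-input discrete-time system obtained from augmenting with an integrator, if the pair (A, B) is controllable and the matrix [[A − I, B], [C, 0]] has full row rank, then the augmented pair (A_a, B_a) with A_a = [[A, 0], [−C, I]] and B_a = [B; 0] is controllable. -/

import Mathlib

/-!
By Cayley–Hamilton, full rank of a controllability matrix `[B, AB, …, Aᴺ⁻¹B]` with `N` at least
the state dimension means that no nonzero row vector `x` has `x Aʲ B = 0` for all `j`. Let
`v = (x, z)` annihilate every `A_aʲ B_a`. Then so does `v (A_a - 1) = (x (A - 1) - z C, 0)`, and
since its integrator component vanishes this reads `(x (A - 1) - z C) Aʲ B = 0` for all `j`; hence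
`x (A - 1) = z C` by controllability of `(A, B)`. Together with `x B = 0` (the case `j = 0`), the
row vector `(x, -z)` annihilates `[[A - 1, B], [C, 0]]`, so it vanishes by the rank condition.
-/

open Matrix Polynomial

namespace Matrix

theorem rank_eq_card_iff_forall_vecMul_eq_zero {m n K : Type*} [Fintype m] [Fintype n] [Field K]
    (M : Matrix m n K) : M.rank = Fintype.card m ↔ ∀ v : m → K, v ᵥ* M = 0 → v = 0 := by
  rw [rank_eq_finrank_span_row, ← Set.finrank, eq_comm,
    ← linearIndependent_iff_card_eq_finrank_span, ← vecMul_injective_iff, ← coe_vecMulLinear,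
    injective_iff_map_eq_zero]
  rfl

section Controllability

variable {ι κ : Type*} [Fintype ι] [DecidableEq ι]

def ctrbMatrix {R : Type*} [Semiring R] (A : Matrix ι ι R) (B : Matrix ι κ R) (N : ℕ) :
    Matrix ι (Fin N × κ) R :=
  of fun i jl => (A ^ (jl.1 : ℕ) * B) i jl.2

theorem vecMul_ctrbMatrix_eq_zero_iff {R : Type*} [Semiring R] {A : Matrix ι ι R}
    {B : Matrix ι κ R} {N : ℕ} {x : ι → R} :
    x ᵥ* ctrbMatrix A B N = 0 ↔ ∀ j < N, x ᵥ* A ^ j ᵥ* B = 0 := by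
  simp only [funext_iff, Prod.forall, Fin.forall_iff, vecMul_vecMul]
  rfl

theorem vecMul_pow_vecMul_eq_zero_of_forall_lt_card {R : Type*} [CommRing R] [Nontrivial R]
    {A : Matrix ι ι R} {B : Matrix ι κ R} {x : ι → R}
    (h : ∀ j < Fintype.card ι, x ᵥ* A ^ j ᵥ* B = 0) (k : ℕ) : x ᵥ* A ^ k ᵥ* B = 0 := by
  cases isEmpty_or_nonempty ι
  · simp [Subsingleton.elim x 0]
  have hdeg : (X ^ k %ₘ A.charpoly).natDegree < Fintype.card ι := by
    rw [← A.charpoly_natDegree_eq_dim]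
    refine natDegree_modByMonic_lt _ A.charpoly_monic fun hone => ?_
    have hcard := A.charpoly_natDegree_eq_dim
    rw [hone, natDegree_one] at hcard
    exact Fintype.card_ne_zero hcard.symm
  rw [pow_eq_aeval_mod_charpoly, aeval_eq_sum_range' hdeg, vecMul_sum, sum_vecMul]
  refine Finset.sum_eq_zero fun j hj => ?_
  rw [vecMul_smul, smul_vecMul, h j (Finset.mem_range.mp hj), smul_zero]

theorem rank_ctrbMatrix_eq_card_iff {K : Type*} [Field K] [Fintype κ] {A : Matrix ι ι K}
    {B : Matrix ι κ K} {N : ℕ} (hN : Fintype.card ι ≤ N) :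
    (ctrbMatrix A B N).rank = Fintype.card ι ↔
      ∀ x : ι → K, (∀ j, x ᵥ* A ^ j ᵥ* B = 0) → x = 0 := by
  simp only [rank_eq_card_iff_forall_vecMul_eq_zero, vecMul_ctrbMatrix_eq_zero_iff]
  refine forall_congr' fun x => imp_congr_left ⟨fun h => ?_, fun h j _ => h j⟩
  exact vecMul_pow_vecMul_eq_zero_of_forall_lt_card fun j hj => h j (hj.trans_le hN)

end Controllability

section BlockTriangular

variable {m n : Type*} [Fintype m] [Fintype n] [DecidableEq m] [DecidableEq n]

theorem sumElim_zero_vecMul_fromBlocks_zero_pow {R : Type*} [Semiring R] (A : Matrix m m R)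
    (C : Matrix n m R) (D : Matrix n n R) (y : m → R) (j : ℕ) :
    Sum.elim y 0 ᵥ* fromBlocks A 0 C D ^ j = Sum.elim (y ᵥ* A ^ j) 0 := by
  induction j with
  | zero => simp
  | succ j ih =>
    rw [pow_succ, ← vecMul_vecMul, ih, vecMul_fromBlocks, pow_succ, ← vecMul_vecMul]
    simp

theorem sumElim_vecMul_fromBlocks_sub {R : Type*} [Ring R] (A : Matrix m m R)
    (C : Matrix n m R) (x : m → R) (z : n → R) :
    Sum.elim x z ᵥ* fromBlocks A 0 (-C) 1 - Sum.elim x z =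
      Sum.elim (x ᵥ* (A - 1) - z ᵥ* C) (0 : n → R) := by
  ext (i | i)
  · simp only [vecMul_fromBlocks, vecMul_sub, vecMul_neg, vecMul_one, Sum.elim_comp_inl,
      Sum.elim_comp_inr, vecMul_zero, zero_add, Pi.sub_apply, Sum.elim_inl, Pi.add_apply,
      Pi.neg_apply]
    abel
  · simp [vecMul_fromBlocks]

end BlockTriangular

end Matrix

/-- Controllability of the integrator-augmented pair `(A_a, B_a)` from
controllability of `(A, B)` and the full-row-rank condition on
`[[A − I, B], [C, 0]]`. -/
theorem augmented_pair_controllable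
    (n m p : ℕ)
    (A : Matrix (Fin n) (Fin n) ℝ) (B : Matrix (Fin n) (Fin m) ℝ)
    (C : Matrix (Fin p) (Fin n) ℝ)
    (ctrb : Matrix (Fin n) (Fin n × Fin m) ℝ)
    (hctrb : ∀ i jl, ctrb i jl = (A ^ (jl.1 : ℕ) * B) i jl.2)
    (hAB : ctrb.rank = n)
    (hrank : (Matrix.fromBlocks (A - 1) B C 0).rank = n + p)
    (Aa : Matrix (Fin n ⊕ Fin p) (Fin n ⊕ Fin p) ℝ)
    (hAa : Aa = Matrix.fromBlocks A 0 (-C) 1)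
    (Ba : Matrix (Fin n ⊕ Fin p) (Fin m) ℝ)
    (hBa : Ba = Matrix.of (Sum.elim (fun i j => B i j) (fun _ _ => 0)))
    (ctrbA : Matrix (Fin n ⊕ Fin p) (Fin (n + p) × Fin m) ℝ)
    (hctrbA : ∀ i jl, ctrbA i jl = (Aa ^ (jl.1 : ℕ) * Ba) i jl.2) :
    ctrbA.rank = n + p := by
  obtain rfl : ctrb = ctrbMatrix A B n := ext hctrb
  obtain rfl : ctrbA = ctrbMatrix Aa Ba (n + p) := ext hctrbA
  obtain rfl : Ba = fromRows B 0 := hBa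
  subst hAa
  have hcard : Fintype.card (Fin n ⊕ Fin p) = n + p := by simp
  replace hAB := (rank_ctrbMatrix_eq_card_iff (by simp)).mp (hAB.trans (Fintype.card_fin n).symm)
  replace hrank := (rank_eq_card_iff_forall_vecMul_eq_zero _).mp (hrank.trans hcard.symm)
  refine ((rank_ctrbMatrix_eq_card_iff hcard.le).mpr ?_).trans hcard
  intro v hv
  obtain ⟨x, z, rfl⟩ : ∃ x z, v = Sum.elim x z := ⟨_, _, (Sum.elim_comp_inl_inr v).symm⟩
  have hxB : x ᵥ* B = 0 := by simpa [sumElim_vecMul_fromRows] using hv 0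
  have hy : x ᵥ* (A - 1) - z ᵥ* C = 0 := by
    refine hAB _ fun j => ?_
    have hdiff := congr(($(hv (j + 1)) - $(hv j)))
    rw [sub_zero, pow_succ', ← vecMul_vecMul, ← sub_vecMul, ← sub_vecMul,
      sumElim_vecMul_fromBlocks_sub, sumElim_zero_vecMul_fromBlocks_zero_pow,
      sumElim_vecMul_fromRows] at hdiff
    simpa using hdiff
  have hxz := hrank (Sum.elim x (-z)) (by
    simp only [vecMul_fromBlocks, Sum.elim_comp_inl, Sum.elim_comp_inr, neg_vecMul,
      ← sub_eq_add_neg, hy, hxB, vecMul_zero, add_zero, Sum.elim_zero_zero])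
  ext (i | q)
  · simpa using congr_fun hxz (.inl i)
  · simpa using congr_fun hxz (.inr q)
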